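/- (Theorem 4.) Fix a voting environment as below, with 0-1 utilities. Let {Σ̂_n} be a sequence of regular one-round voting strategy profiles and {ε̂_n} a sequence of nonnegative reals with lim_{n→∞} ε̂_n = 0 such that for every n, Σ̂_n is an ε̂_n-strong Bayes Nash equilibrium of the n-agent one-round voting game. Let {Σ_n} be any sequence of two-round profiles such that for every n, Σ_n is second-round consistent with Σ̂_n. Then there exists a sequence of nonnegative reals ε_n with lim_{n→∞} ε_n = 0 such that for every n, Σ_n is an ε_n-strong Bayes Nash equilibrium of the n-agent two-round voting game. -/

import Mathlib

noncomputable section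
open Classical Finset Filter
open scoped Classical

namespace TwoRoundVoting

/-- Number of friendly agents among `n` agents. -/
def numF (alphaF : ℝ) (n : ℕ) : ℕ := ⌊alphaF * n⌋₊

/-- Number of unfriendly agents among `n` agents. -/
def numU (alphaU : ℝ) (n : ℕ) : ℕ := ⌊alphaU * n⌋₊

/-- Number of contingent agents among `n` agents. -/
def numC (alphaF alphaU : ℝ) (n : ℕ) : ℕ := n - numF alphaF n - numU alphaU n

/-- A (behavioral) strategy profile in the two-round voting game with `n` agents.
`s1 i m` is the probability that agent `i` votes `A` in the first round upon signal `m`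
(`true` = signal `h`, `false` = signal `l`); `s2 i m x` is the probability that agent `i`
votes `A` in the second round upon signal `m` when the announced number of
first-round `A`-votes is `x`. -/
structure TwoRound (n : ℕ) where
  s1 : Fin n → Bool → ℝ
  s2 : Fin n → Bool → ℕ → ℝ
  s1_nonneg : ∀ i m, 0 ≤ s1 i m
  s1_le_one : ∀ i m, s1 i m ≤ 1
  s2_nonneg : ∀ i m x, 0 ≤ s2 i m x
  s2_le_one : ∀ i m x, s2 i m x ≤ 1

/-- Probability of signal `h` in world state `k` (`true` = `H`, `false` = `L`). -/
def sigP (phH phL : ℝ) (k : Bool) : ℝ := if k then phH else phL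

/-- Probability of the signal vector `s` conditioned on world state `k`
(signals are i.i.d. conditioned on the state). -/
def sigWeight (phH phL : ℝ) (k : Bool) {n : ℕ} (s : Fin n → Bool) : ℝ :=
  ∏ i, if s i then sigP phH phL k else 1 - sigP phH phL k

/-- Number of `A`-votes in a vote vector. -/
def countA {n : ℕ} (v : Fin n → Bool) : ℕ :=
  (Finset.univ.filter fun i => v i = true).card

/-- Probability that alternative `A` wins (i.e. gets strictly more than `n/2`
second-round votes) conditioned on the world state `k`, under profile `σ`. -/
def prAwins (phH phL : ℝ) {n : ℕ} (σ : TwoRound n) (k : Bool) : ℝ :=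
  ∑ s : Fin n → Bool, ∑ v1 : Fin n → Bool, ∑ v2 : Fin n → Bool,
    sigWeight phH phL k s *
      (∏ i, if v1 i then σ.s1 i (s i) else 1 - σ.s1 i (s i)) *
      (∏ i, if v2 i then σ.s2 i (s i) (countA v1) else 1 - σ.s2 i (s i) (countA v1)) *
      (if 2 * countA v2 > n then 1 else 0)

/-- Fidelity of a profile: probability that the informed majority decision is reached. -/
def fidelity (PH PL phH phL : ℝ) {n : ℕ} (σ : TwoRound n) : ℝ :=
  PL * (1 - prAwins phH phL σ false) + PH * prAwins phH phL σ true

/-- Expected 0-1 utility of agent `i`: the first `numF` agents are friendly,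
the next `numU` are unfriendly, and the remaining agents are contingent. -/
def util (PH PL phH phL alphaF alphaU : ℝ) {n : ℕ} (σ : TwoRound n) (i : Fin n) : ℝ :=
  if (i : ℕ) < numF alphaF n then
    PH * prAwins phH phL σ true + PL * prAwins phH phL σ false
  else if (i : ℕ) < numF alphaF n + numU alphaU n then
    PH * (1 - prAwins phH phL σ true) + PL * (1 - prAwins phH phL σ false)
  else
    fidelity PH PL phH phL σ

/-- `σ` is an `ε`-strong Bayes Nash equilibrium: no coalition `D` can deviate so that
every member weakly gains and some member gains more than `ε`. -/
def IsEpsStrongBNE (PH PL phH phL alphaF alphaU : ℝ) {n : ℕ} (σ : TwoRound n) (ε : ℝ) :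
    Prop :=
  ¬ ∃ (D : Finset (Fin n)) (σ' : TwoRound n),
      (∀ i, i ∉ D → σ'.s1 i = σ.s1 i ∧ σ'.s2 i = σ.s2 i) ∧
      (∀ i ∈ D, util PH PL phH phL alphaF alphaU σ i ≤
        util PH PL phH phL alphaF alphaU σ' i) ∧
      (∃ i ∈ D, util PH PL phH phL alphaF alphaU σ i + ε <
        util PH PL phH phL alphaF alphaU σ' i)


/-- A (behavioral) strategy profile in the one-round voting game with `n` agents:
`s i m` is the probability that agent `i` votes `A` upon signal `m`. -/
structure OneRound (n : ℕ) where
  s : Fin n → Bool → ℝ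
  nonneg : ∀ i m, 0 ≤ s i m
  le_one : ∀ i m, s i m ≤ 1

/-- Probability that `A` wins in the one-round voting game, conditioned on state `k`. -/
def prAwins1 (phH phL : ℝ) {n : ℕ} (σ : OneRound n) (k : Bool) : ℝ :=
  ∑ s : Fin n → Bool, ∑ v : Fin n → Bool,
    sigWeight phH phL k s *
      (∏ i, if v i then σ.s i (s i) else 1 - σ.s i (s i)) *
      (if 2 * countA v > n then 1 else 0)

/-- Expected 0-1 utility of agent `i` in the one-round game. -/
def util1 (PH PL phH phL alphaF alphaU : ℝ) {n : ℕ} (σ : OneRound n) (i : Fin n) : ℝ :=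
  if (i : ℕ) < numF alphaF n then
    PH * prAwins1 phH phL σ true + PL * prAwins1 phH phL σ false
  else if (i : ℕ) < numF alphaF n + numU alphaU n then
    PH * (1 - prAwins1 phH phL σ true) + PL * (1 - prAwins1 phH phL σ false)
  else
    PL * (1 - prAwins1 phH phL σ false) + PH * prAwins1 phH phL σ true

/-- `ε`-strong Bayes Nash equilibrium of the one-round voting game. -/
def IsEpsStrongBNE1 (PH PL phH phL alphaF alphaU : ℝ) {n : ℕ} (σ : OneRound n) (ε : ℝ) :
    Prop :=
  ¬ ∃ (D : Finset (Fin n)) (σ' : OneRound n),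
      (∀ i, i ∉ D → σ'.s i = σ.s i) ∧
      (∀ i ∈ D, util1 PH PL phH phL alphaF alphaU σ i ≤
        util1 PH PL phH phL alphaF alphaU σ' i) ∧
      (∃ i ∈ D, util1 PH PL phH phL alphaF alphaU σ i + ε <
        util1 PH PL phH phL alphaF alphaU σ' i)

/-- A one-round profile is regular if every friendly agent always votes `A` and every
unfriendly agent always votes `R`. -/
def Regular (alphaF alphaU : ℝ) {n : ℕ} (σ : OneRound n) : Prop :=
  ∀ (i : Fin n) (m : Bool),
    ((i : ℕ) < numF alphaF n → σ.s i m = 1) ∧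
    (numF alphaF n ≤ (i : ℕ) ∧ (i : ℕ) < numF alphaF n + numU alphaU n → σ.s i m = 0)

/-- A two-round profile `σ` is second-round consistent with a one-round profile `τ` if
every agent's second-round strategy ignores the first-round outcome and coincides with
its one-round strategy (the first-round strategies are arbitrary). -/
def SecondRoundConsistent {n : ℕ} (σ : TwoRound n) (τ : OneRound n) : Prop :=
  ∀ (i : Fin n) (m : Bool) (x : ℕ), σ.s2 i m x = τ.s i m


/-! ### Auxiliary lemmas -/

section Aux

lemma sum_prod_bool {n : ℕ} (g : Fin n → Bool → ℝ) :
    ∑ v : Fin n → Bool, ∏ i, g i (v i) = ∏ i, (g i true + g i false) := by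
  rw [← Fintype.prod_sum]
  simp

lemma sum_bern {n : ℕ} (q : Fin n → ℝ) :
    ∑ v : Fin n → Bool, ∏ i, (if v i then q i else 1 - q i) = 1 := by
  have h := sum_prod_bool (fun i (b : Bool) => if b then q i else 1 - q i)
  simp only [if_true, if_false, Bool.if_true_left] at h
  rw [h]
  simp

lemma prod_bern_nonneg {n : ℕ} (q : Fin n → ℝ) (h0 : ∀ i, 0 ≤ q i) (h1 : ∀ i, q i ≤ 1)
    (v : Fin n → Bool) : 0 ≤ ∏ i, (if v i then q i else 1 - q i) := by
  apply Finset.prod_nonneg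
  intro i _
  cases hv : v i <;> simp <;> [linarith [h1 i]; exact h0 i]

lemma countA_cast {n : ℕ} (v : Fin n → Bool) :
    (countA v : ℝ) = ∑ i, (if v i then (1:ℝ) else 0) := by
  rw [countA, Finset.card_filter]
  push_cast
  apply Finset.sum_congr rfl
  intro i _
  by_cases h : v i = true <;> simp [h]

lemma countA_mono {n : ℕ} (v v' : Fin n → Bool) (h : ∀ i, v i = true → v' i = true) :
    countA v ≤ countA v' := by
  apply Finset.card_le_card
  intro i hi
  simp only [Finset.mem_filter, Finset.mem_univ, true_and] at *
  exact h i hi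

lemma indw_nonneg {n : ℕ} (v : Fin n → Bool) :
    (0:ℝ) ≤ (if 2 * countA v > n then (1:ℝ) else 0) := by positivity

lemma indw_mono {n : ℕ} (v v' : Fin n → Bool) (h : ∀ i, v i = true → v' i = true) :
    (if 2 * countA v > n then (1:ℝ) else 0) ≤ (if 2 * countA v' > n then (1:ℝ) else 0) := by
  have := countA_mono v v' h
  by_cases hv : 2 * countA v > n
  · rw [if_pos hv, if_pos (by omega)]
  · rw [if_neg hv]
    exact indw_nonneg v'

lemma sum_ind_mono_single {n : ℕ} (q q' : Fin n → ℝ)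
    (hq0 : ∀ i, 0 ≤ q i) (hq1 : ∀ i, q i ≤ 1)
    (j : Fin n) (hagree : ∀ i, i ≠ j → q i = q' i) (hj : q j ≤ q' j) (hj1 : q' j ≤ 1)
    (I : (Fin n → Bool) → ℝ) (hI0 : ∀ v, 0 ≤ I v)
    (hImono : ∀ v v' : Fin n → Bool, (∀ i, v i = true → v' i = true) → I v ≤ I v') :
    ∑ v : Fin n → Bool, (∏ i, if v i then q i else 1 - q i) * I v ≤
      ∑ v : Fin n → Bool, (∏ i, if v i then q' i else 1 - q' i) * I v := by
  classical
  set e := Equiv.funSplitAt j Bool with he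
  have hrw : ∀ r : Fin n → ℝ, ∑ v : Fin n → Bool, (∏ i, if v i then r i else 1 - r i) * I v
      = ∑ w : {k : Fin n // k ≠ j} → Bool, ∑ b : Bool,
          (∏ i, if e.symm (b, w) i then r i else 1 - r i) * I (e.symm (b, w)) := by
    intro r
    rw [← Equiv.sum_comp e.symm (fun v => (∏ i, if v i then r i else 1 - r i) * I v),
      Fintype.sum_prod_type, Finset.sum_comm]
  rw [hrw q, hrw q']
  apply Finset.sum_le_sum
  intro w _
  set u := e.symm (true, w) with hu
  set z := e.symm (false, w) with hz
  have huj : u j = true := by simp [hu, he]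
  have hzj : z j = false := by simp [hz, he]
  have hoff : ∀ i, i ≠ j → u i = z i := by
    intro i hi
    simp [hu, hz, he, Equiv.funSplitAt_symm_apply, dif_neg hi]
  have hsplit : ∀ (r : Fin n → ℝ) (v : Fin n → Bool),
      (∏ i, if v i then r i else 1 - r i)
        = (if v j then r j else 1 - r j) *
            ∏ i ∈ Finset.univ.erase j, (if v i then r i else 1 - r i) := by
    intro r v
    rw [← Finset.mul_prod_erase Finset.univ _ (Finset.mem_univ j)]
  have hprod_eq : ∀ r : Fin n → ℝ,
      ∏ i ∈ Finset.univ.erase j, (if u i then r i else 1 - r i)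
        = ∏ i ∈ Finset.univ.erase j, (if z i then r i else 1 - r i) := by
    intro r
    apply Finset.prod_congr rfl
    intro i hi
    rw [hoff i (Finset.mem_erase.mp hi).1]
  have hprod_qq' : ∏ i ∈ Finset.univ.erase j, (if z i then q i else 1 - q i)
      = ∏ i ∈ Finset.univ.erase j, (if z i then q' i else 1 - q' i) := by
    apply Finset.prod_congr rfl
    intro i hi
    rw [hagree i (Finset.mem_erase.mp hi).1]
  set A := ∏ i ∈ Finset.univ.erase j, (if z i then q i else 1 - q i) with hA
  have hA0 : 0 ≤ A := by
    apply Finset.prod_nonneg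
    intro i _
    cases hv : z i <;> simp <;> [skip; exact hq0 i]
    linarith [hq1 i]
  have hIzu : I z ≤ I u := by
    apply hImono
    intro i hiz
    by_cases hij : i = j
    · subst hij; exact huj
    · rw [hoff i hij]; exact hiz
  have lhs_eq : ∑ b : Bool, (∏ i, if e.symm (b, w) i then q i else 1 - q i) * I (e.symm (b, w))
      = q j * (A * I u) + (1 - q j) * (A * I z) := by
    rw [Fintype.sum_bool, ← hu, ← hz, hsplit q u, hsplit q z, huj, hzj, hprod_eq q, ← hA]
    norm_num
    ring
  have rhs_eq : ∑ b : Bool, (∏ i, if e.symm (b, w) i then q' i else 1 - q' i) * I (e.symm (b, w))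
      = q' j * (A * I u) + (1 - q' j) * (A * I z) := by
    rw [Fintype.sum_bool, ← hu, ← hz, hsplit q' u, hsplit q' z, huj, hzj, hprod_eq q',
      ← hprod_qq']
    norm_num
    ring
  rw [lhs_eq, rhs_eq]
  nlinarith [mul_nonneg hA0 (hI0 z), mul_nonneg hA0 (hI0 u),
    mul_le_mul_of_nonneg_left hIzu hA0]

lemma sum_ind_mono {n : ℕ} (q q' : Fin n → ℝ)
    (hq0 : ∀ i, 0 ≤ q i) (hq1 : ∀ i, q i ≤ 1)
    (hq'0 : ∀ i, 0 ≤ q' i) (hq'1 : ∀ i, q' i ≤ 1)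
    (hle : ∀ i, q i ≤ q' i)
    (I : (Fin n → Bool) → ℝ) (hI0 : ∀ v, 0 ≤ I v)
    (hImono : ∀ v v' : Fin n → Bool, (∀ i, v i = true → v' i = true) → I v ≤ I v') :
    ∑ v : Fin n → Bool, (∏ i, if v i then q i else 1 - q i) * I v ≤
      ∑ v : Fin n → Bool, (∏ i, if v i then q' i else 1 - q' i) * I v := by
  classical
  have H : ∀ T : Finset (Fin n),
      ∑ v : Fin n → Bool, (∏ i, if v i then q i else 1 - q i) * I v ≤
      ∑ v : Fin n → Bool, (∏ i, if v i then (if i ∈ T then q' i else q i) else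
        1 - (if i ∈ T then q' i else q i)) * I v := by
    intro T
    induction T using Finset.induction_on with
    | empty => simp
    | @insert a T ha IH =>
      refine le_trans IH ?_
      apply sum_ind_mono_single _ _ ?_ ?_ a ?_ ?_ ?_ I hI0 hImono
      · intro i; split <;> [exact hq'0 i; exact hq0 i]
      · intro i; split <;> [exact hq'1 i; exact hq1 i]
      · intro i hi
        by_cases hT : i ∈ T
        · rw [if_pos hT, if_pos (Finset.mem_insert_of_mem hT)]
        · rw [if_neg hT, if_neg (by simp [Finset.mem_insert, hi, hT])]
      · rw [if_neg ha, if_pos (Finset.mem_insert_self a T)]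
        exact hle a
      · rw [if_pos (Finset.mem_insert_self a T)]
        exact hq'1 a
  have h2 := H Finset.univ
  simpa using h2

end Aux


section Aux2

/-- The marginal probability that agent `i` votes `A` in the one-round game in state `k`. -/
def margP (phH phL : ℝ) {n : ℕ} (σ : OneRound n) (k : Bool) (i : Fin n) : ℝ :=
  sigP phH phL k * σ.s i true + (1 - sigP phH phL k) * σ.s i false

lemma sigP_nonneg {phH phL : ℝ} (h0 : 0 ≤ phL) (h01 : phL ≤ phH) (k : Bool) :
    0 ≤ sigP phH phL k := by cases k <;> simp [sigP] <;> linarith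

lemma sigP_le_one {phH phL : ℝ} (h01 : phL ≤ phH) (h1 : phH ≤ 1) (k : Bool) :
    sigP phH phL k ≤ 1 := by cases k <;> simp [sigP] <;> linarith

lemma margP_nonneg {phH phL : ℝ} (h0 : 0 ≤ phL) (h01 : phL ≤ phH) (h1 : phH ≤ 1)
    {n : ℕ} (σ : OneRound n) (k : Bool) (i : Fin n) : 0 ≤ margP phH phL σ k i := by
  have h2 := sigP_nonneg h0 h01 k
  have h3 := sigP_le_one h01 h1 k
  have h4 := σ.nonneg i true
  have h5 := σ.nonneg i false
  unfold margP
  nlinarith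

lemma margP_le_one {phH phL : ℝ} (h0 : 0 ≤ phL) (h01 : phL ≤ phH) (h1 : phH ≤ 1)
    {n : ℕ} (σ : OneRound n) (k : Bool) (i : Fin n) : margP phH phL σ k i ≤ 1 := by
  have h2 := sigP_nonneg h0 h01 k
  have h3 := sigP_le_one h01 h1 k
  have h4 := σ.le_one i true
  have h5 := σ.le_one i false
  unfold margP
  nlinarith

lemma prAwins1_eq (phH phL : ℝ) {n : ℕ} (σ : OneRound n) (k : Bool) :
    prAwins1 phH phL σ k = ∑ v : Fin n → Bool,
      (∏ i, if v i then margP phH phL σ k i else 1 - margP phH phL σ k i) *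
        (if 2 * countA v > n then (1:ℝ) else 0) := by
  unfold prAwins1 sigWeight
  rw [Finset.sum_comm]
  apply Finset.sum_congr rfl
  intro v _
  rw [← Finset.sum_mul]
  congr 1
  have step1 : ∀ s : Fin n → Bool,
      (∏ i, if s i then sigP phH phL k else 1 - sigP phH phL k) *
        ∏ i, (if v i then σ.s i (s i) else 1 - σ.s i (s i))
      = ∏ i, ((if s i then sigP phH phL k else 1 - sigP phH phL k) *
          (if v i then σ.s i (s i) else 1 - σ.s i (s i))) := by
    intro s
    rw [Finset.prod_mul_distrib]
  calc ∑ s : Fin n → Bool,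
        (∏ i, if s i then sigP phH phL k else 1 - sigP phH phL k) *
          ∏ i, (if v i then σ.s i (s i) else 1 - σ.s i (s i))
      = ∑ s : Fin n → Bool, ∏ i,
          ((if s i then sigP phH phL k else 1 - sigP phH phL k) *
            (if v i then σ.s i (s i) else 1 - σ.s i (s i))) :=
        Finset.sum_congr rfl fun s _ => step1 s
    _ = ∏ i, (sigP phH phL k * (if v i then σ.s i true else 1 - σ.s i true) +
          (1 - sigP phH phL k) * (if v i then σ.s i false else 1 - σ.s i false)) := by
        have h := sum_prod_bool (fun i (m : Bool) =>
          (if m then sigP phH phL k else 1 - sigP phH phL k) *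
            (if v i then σ.s i m else 1 - σ.s i m))
        simpa using h
    _ = ∏ i, (if v i then margP phH phL σ k i else 1 - margP phH phL σ k i) := by
        apply Finset.prod_congr rfl
        intro i _
        cases hv : v i <;> simp [margP] <;> ring

lemma prAwins1_nonneg {phH phL : ℝ} (h0 : 0 ≤ phL) (h01 : phL ≤ phH) (h1 : phH ≤ 1)
    {n : ℕ} (σ : OneRound n) (k : Bool) : 0 ≤ prAwins1 phH phL σ k := by
  rw [prAwins1_eq]
  apply Finset.sum_nonneg
  intro v _
  apply mul_nonneg _ (indw_nonneg v)
  exact prod_bern_nonneg _ (margP_nonneg h0 h01 h1 σ k) (margP_le_one h0 h01 h1 σ k) v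

lemma prAwins1_le_one {phH phL : ℝ} (h0 : 0 ≤ phL) (h01 : phL ≤ phH) (h1 : phH ≤ 1)
    {n : ℕ} (σ : OneRound n) (k : Bool) : prAwins1 phH phL σ k ≤ 1 := by
  rw [prAwins1_eq]
  calc ∑ v : Fin n → Bool,
        (∏ i, if v i then margP phH phL σ k i else 1 - margP phH phL σ k i) *
          (if 2 * countA v > n then (1:ℝ) else 0)
      ≤ ∑ v : Fin n → Bool,
        (∏ i, if v i then margP phH phL σ k i else 1 - margP phH phL σ k i) := by
        apply Finset.sum_le_sum
        intro v _
        have hw := prod_bern_nonneg _ (margP_nonneg h0 h01 h1 σ k)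
          (margP_le_one h0 h01 h1 σ k) v
        have : (if 2 * countA v > n then (1:ℝ) else 0) ≤ 1 := by
          split <;> norm_num
        nlinarith
    _ = 1 := sum_bern _

lemma prAwins_collapse (phH phL : ℝ) {n : ℕ} (σ : TwoRound n) (τ : OneRound n)
    (h : ∀ (i : Fin n) (m : Bool) (x : ℕ), σ.s2 i m x = τ.s i m) (k : Bool) :
    prAwins phH phL σ k = prAwins1 phH phL τ k := by
  unfold prAwins prAwins1
  apply Finset.sum_congr rfl
  intro s _
  simp only [h]
  rw [Finset.sum_comm]
  apply Finset.sum_congr rfl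
  intro v2 _
  have step : ∀ v1 : Fin n → Bool,
      sigWeight phH phL k s * (∏ i, if v1 i then σ.s1 i (s i) else 1 - σ.s1 i (s i)) *
        (∏ i, if v2 i then τ.s i (s i) else 1 - τ.s i (s i)) *
        (if 2 * countA v2 > n then (1:ℝ) else 0)
      = (∏ i, if v1 i then σ.s1 i (s i) else 1 - σ.s1 i (s i)) *
        (sigWeight phH phL k s * (∏ i, if v2 i then τ.s i (s i) else 1 - τ.s i (s i)) *
          (if 2 * countA v2 > n then (1:ℝ) else 0)) := by
    intro v1
    ring
  rw [Finset.sum_congr rfl fun v1 _ => step v1, ← Finset.sum_mul, sum_bern, one_mul]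

lemma prAwins_nonneg {phH phL : ℝ} (h0 : 0 ≤ phL) (h01 : phL ≤ phH) (h1 : phH ≤ 1)
    {n : ℕ} (σ : TwoRound n) (k : Bool) : 0 ≤ prAwins phH phL σ k := by
  unfold prAwins
  apply Finset.sum_nonneg; intro s _
  apply Finset.sum_nonneg; intro v1 _
  apply Finset.sum_nonneg; intro v2 _
  have hW : 0 ≤ sigWeight phH phL k s :=
    prod_bern_nonneg (fun _ => sigP phH phL k) (fun _ => sigP_nonneg h0 h01 k)
      (fun _ => sigP_le_one h01 h1 k) s
  have h1' := prod_bern_nonneg (fun i => σ.s1 i (s i)) (fun i => σ.s1_nonneg i (s i))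
    (fun i => σ.s1_le_one i (s i)) v1
  have h2' := prod_bern_nonneg (fun i => σ.s2 i (s i) (countA v1))
    (fun i => σ.s2_nonneg i (s i) (countA v1)) (fun i => σ.s2_le_one i (s i) (countA v1)) v2
  have h3' := indw_nonneg (n := n) v2
  positivity

lemma prAwins_le_one {phH phL : ℝ} (h0 : 0 ≤ phL) (h01 : phL ≤ phH) (h1 : phH ≤ 1)
    {n : ℕ} (σ : TwoRound n) (k : Bool) : prAwins phH phL σ k ≤ 1 := by
  unfold prAwins
  have key : ∀ s : Fin n → Bool, ∀ v1 : Fin n → Bool,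
      ∑ v2 : Fin n → Bool,
        sigWeight phH phL k s * (∏ i, if v1 i then σ.s1 i (s i) else 1 - σ.s1 i (s i)) *
          (∏ i, if v2 i then σ.s2 i (s i) (countA v1) else 1 - σ.s2 i (s i) (countA v1)) *
          (if 2 * countA v2 > n then (1:ℝ) else 0)
      ≤ sigWeight phH phL k s * (∏ i, if v1 i then σ.s1 i (s i) else 1 - σ.s1 i (s i)) := by
    intro s v1
    have hW : 0 ≤ sigWeight phH phL k s :=
      prod_bern_nonneg (fun _ => sigP phH phL k) (fun _ => sigP_nonneg h0 h01 k)
        (fun _ => sigP_le_one h01 h1 k) s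
    have h1' := prod_bern_nonneg (fun i => σ.s1 i (s i)) (fun i => σ.s1_nonneg i (s i))
      (fun i => σ.s1_le_one i (s i)) v1
    calc ∑ v2 : Fin n → Bool,
          sigWeight phH phL k s * (∏ i, if v1 i then σ.s1 i (s i) else 1 - σ.s1 i (s i)) *
            (∏ i, if v2 i then σ.s2 i (s i) (countA v1) else 1 - σ.s2 i (s i) (countA v1)) *
            (if 2 * countA v2 > n then (1:ℝ) else 0)
        ≤ ∑ v2 : Fin n → Bool,
          sigWeight phH phL k s * (∏ i, if v1 i then σ.s1 i (s i) else 1 - σ.s1 i (s i)) *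
            (∏ i, if v2 i then σ.s2 i (s i) (countA v1) else 1 - σ.s2 i (s i) (countA v1)) := by
          apply Finset.sum_le_sum
          intro v2 _
          have h2' := prod_bern_nonneg (fun i => σ.s2 i (s i) (countA v1))
            (fun i => σ.s2_nonneg i (s i) (countA v1))
            (fun i => σ.s2_le_one i (s i) (countA v1)) v2
          have hind : (if 2 * countA v2 > n then (1:ℝ) else 0) ≤ 1 := by split <;> norm_num
          have hind0 := indw_nonneg (n := n) v2
          nlinarith [mul_nonneg (mul_nonneg hW h1') h2']
      _ = sigWeight phH phL k s * (∏ i, if v1 i then σ.s1 i (s i) else 1 - σ.s1 i (s i)) := by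
          rw [← Finset.mul_sum, sum_bern, mul_one]
  calc ∑ s : Fin n → Bool, ∑ v1 : Fin n → Bool, ∑ v2 : Fin n → Bool,
        sigWeight phH phL k s * (∏ i, if v1 i then σ.s1 i (s i) else 1 - σ.s1 i (s i)) *
          (∏ i, if v2 i then σ.s2 i (s i) (countA v1) else 1 - σ.s2 i (s i) (countA v1)) *
          (if 2 * countA v2 > n then (1:ℝ) else 0)
      ≤ ∑ s : Fin n → Bool, ∑ v1 : Fin n → Bool,
          sigWeight phH phL k s * (∏ i, if v1 i then σ.s1 i (s i) else 1 - σ.s1 i (s i)) := by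
        apply Finset.sum_le_sum
        intro s _
        exact Finset.sum_le_sum fun v1 _ => key s v1
    _ = ∑ s : Fin n → Bool, sigWeight phH phL k s := by
        apply Finset.sum_congr rfl
        intro s _
        rw [← Finset.mul_sum, sum_bern, mul_one]
    _ = 1 := sum_bern _

lemma prAwins_mono {phH phL : ℝ} (h0 : 0 ≤ phL) (h01 : phL ≤ phH) (h1 : phH ≤ 1)
    {n : ℕ} (σ σ' : TwoRound n) (hs1 : σ.s1 = σ'.s1)
    (hs2 : ∀ i m x, σ.s2 i m x ≤ σ'.s2 i m x) (k : Bool) :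
    prAwins phH phL σ k ≤ prAwins phH phL σ' k := by
  unfold prAwins
  rw [← hs1]
  apply Finset.sum_le_sum
  intro s _
  apply Finset.sum_le_sum
  intro v1 _
  have hW : 0 ≤ sigWeight phH phL k s :=
    prod_bern_nonneg (fun _ => sigP phH phL k) (fun _ => sigP_nonneg h0 h01 k)
      (fun _ => sigP_le_one h01 h1 k) s
  have h1' := prod_bern_nonneg (fun i => σ.s1 i (s i)) (fun i => σ.s1_nonneg i (s i))
    (fun i => σ.s1_le_one i (s i)) v1
  have hre : ∀ τ : TwoRound n, ∑ v2 : Fin n → Bool,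
      sigWeight phH phL k s * (∏ i, if v1 i then σ.s1 i (s i) else 1 - σ.s1 i (s i)) *
        (∏ i, if v2 i then τ.s2 i (s i) (countA v1) else 1 - τ.s2 i (s i) (countA v1)) *
        (if 2 * countA v2 > n then (1:ℝ) else 0)
      = (sigWeight phH phL k s * (∏ i, if v1 i then σ.s1 i (s i) else 1 - σ.s1 i (s i))) *
        ∑ v2 : Fin n → Bool,
          (∏ i, if v2 i then τ.s2 i (s i) (countA v1) else 1 - τ.s2 i (s i) (countA v1)) *
          (if 2 * countA v2 > n then (1:ℝ) else 0) := by
    intro τ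
    rw [Finset.mul_sum]
    apply Finset.sum_congr rfl
    intro v2 _
    ring
  rw [hre σ, hre σ']
  apply mul_le_mul_of_nonneg_left _ (mul_nonneg hW h1')
  apply sum_ind_mono
  · exact fun i => σ.s2_nonneg i (s i) (countA v1)
  · exact fun i => σ.s2_le_one i (s i) (countA v1)
  · exact fun i => σ'.s2_nonneg i (s i) (countA v1)
  · exact fun i => σ'.s2_le_one i (s i) (countA v1)
  · exact fun i => hs2 i (s i) (countA v1)
  · exact fun v => indw_nonneg v
  · exact fun v v' hvv => indw_mono v v' hvv

end Aux2


section Aux3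

lemma Ew_chi_pair {n : ℕ} (q : Fin n → ℝ) (i j : Fin n) (hij : i ≠ j) :
    ∑ v : Fin n → Bool, (∏ k, if v k then q k else 1 - q k) *
      (((if v i then (1:ℝ) else 0) - q i) * ((if v j then (1:ℝ) else 0) - q j)) = 0 := by
  classical
  have step : ∀ v : Fin n → Bool,
      (∏ k, if v k then q k else 1 - q k) *
        (((if v i then (1:ℝ) else 0) - q i) * ((if v j then (1:ℝ) else 0) - q j))
      = ∏ k, ((if v k then q k else 1 - q k) *
          ((if k = i then (if v k then (1:ℝ) else 0) - q i else 1) *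
           (if k = j then (if v k then (1:ℝ) else 0) - q j else 1))) := by
    intro v
    rw [Finset.prod_mul_distrib, Finset.prod_mul_distrib]
    congr 1
    rw [Finset.prod_ite_eq' Finset.univ i
      (fun k => (if v k then (1:ℝ) else 0) - q i), Finset.prod_ite_eq' Finset.univ j
      (fun k => (if v k then (1:ℝ) else 0) - q j)]
    simp
  rw [Finset.sum_congr rfl fun v _ => step v]
  have h := sum_prod_bool (fun k (b : Bool) => (if b then q k else 1 - q k) *
      ((if k = i then (if b then (1:ℝ) else 0) - q i else 1) *
       (if k = j then (if b then (1:ℝ) else 0) - q j else 1)))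
  rw [h]
  apply Finset.prod_eq_zero (Finset.mem_univ i)
  simp [if_neg hij]
  ring

lemma Ew_chi_sq {n : ℕ} (q : Fin n → ℝ) (i : Fin n) :
    ∑ v : Fin n → Bool, (∏ k, if v k then q k else 1 - q k) *
      (((if v i then (1:ℝ) else 0) - q i) * ((if v i then (1:ℝ) else 0) - q i))
      = q i * (1 - q i) := by
  classical
  have step : ∀ v : Fin n → Bool,
      (∏ k, if v k then q k else 1 - q k) *
        (((if v i then (1:ℝ) else 0) - q i) * ((if v i then (1:ℝ) else 0) - q i))
      = ∏ k, ((if v k then q k else 1 - q k) *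
          (if k = i then ((if v k then (1:ℝ) else 0) - q i) *
            ((if v k then (1:ℝ) else 0) - q i) else 1)) := by
    intro v
    rw [Finset.prod_mul_distrib]
    congr 1
    rw [Finset.prod_ite_eq' Finset.univ i
      (fun k => ((if v k then (1:ℝ) else 0) - q i) * ((if v k then (1:ℝ) else 0) - q i))]
    simp
  rw [Finset.sum_congr rfl fun v _ => step v]
  have h := sum_prod_bool (fun k (b : Bool) => (if b then q k else 1 - q k) *
      (if k = i then ((if b then (1:ℝ) else 0) - q i) * ((if b then (1:ℝ) else 0) - q i)
        else 1))
  rw [h]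
  rw [Finset.prod_eq_single_of_mem i (Finset.mem_univ i)]
  · simp
    ring
  · intro k _ hk
    simp [if_neg hk]

lemma Ew_Zsq {n : ℕ} (q : Fin n → ℝ) :
    ∑ v : Fin n → Bool, (∏ k, if v k then q k else 1 - q k) *
      (∑ i, ((if v i then (1:ℝ) else 0) - q i)) ^ 2 = ∑ i, q i * (1 - q i) := by
  classical
  have expand : ∀ v : Fin n → Bool,
      (∏ k, if v k then q k else 1 - q k) * (∑ i, ((if v i then (1:ℝ) else 0) - q i)) ^ 2
      = ∑ i, ∑ j, (∏ k, if v k then q k else 1 - q k) *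
          (((if v i then (1:ℝ) else 0) - q i) * ((if v j then (1:ℝ) else 0) - q j)) := by
    intro v
    rw [sq, Finset.sum_mul_sum, Finset.mul_sum]
    apply Finset.sum_congr rfl
    intro i _
    rw [Finset.mul_sum]
  rw [Finset.sum_congr rfl fun v _ => expand v, Finset.sum_comm]
  apply Finset.sum_congr rfl
  intro i _
  rw [Finset.sum_comm]
  rw [Finset.sum_eq_single i]
  · exact Ew_chi_sq q i
  · intro j _ hji
    exact Ew_chi_pair q i j (Ne.symm hji)
  · intro h
    exact absurd (Finset.mem_univ i) h

lemma tail_le {n : ℕ} (q : Fin n → ℝ) (hq0 : ∀ i, 0 ≤ q i) (hq1 : ∀ i, q i ≤ 1)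
    (τ : ℝ) (hτ : 0 < τ) (P : (Fin n → Bool) → Prop) [DecidablePred P]
    (hP : ∀ v, P v → τ ≤ |(∑ i, ((if v i then (1:ℝ) else 0) - q i))|) :
    ∑ v : Fin n → Bool, (∏ i, if v i then q i else 1 - q i) *
      (if P v then (1:ℝ) else 0) ≤ (n : ℝ) / (4 * τ ^ 2) := by
  classical
  have hτ2 : (0:ℝ) < τ ^ 2 := by positivity
  calc ∑ v : Fin n → Bool, (∏ i, if v i then q i else 1 - q i) * (if P v then (1:ℝ) else 0)
      ≤ ∑ v : Fin n → Bool, (∏ i, if v i then q i else 1 - q i) *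
          ((∑ i, ((if v i then (1:ℝ) else 0) - q i)) ^ 2 / τ ^ 2) := by
        apply Finset.sum_le_sum
        intro v _
        have hw := prod_bern_nonneg q hq0 hq1 v
        by_cases hPv : P v
        · rw [if_pos hPv]
          apply mul_le_mul_of_nonneg_left _ hw
          rw [le_div_iff₀ hτ2, one_mul]
          have habs := hP v hPv
          calc τ ^ 2 ≤ |(∑ i, ((if v i then (1:ℝ) else 0) - q i))| ^ 2 := by
                apply pow_le_pow_left₀ hτ.le habs
            _ = (∑ i, ((if v i then (1:ℝ) else 0) - q i)) ^ 2 := sq_abs _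
        · rw [if_neg hPv, mul_zero]
          positivity
    _ = (∑ v : Fin n → Bool, (∏ i, if v i then q i else 1 - q i) *
          (∑ i, ((if v i then (1:ℝ) else 0) - q i)) ^ 2) / τ ^ 2 := by
        rw [Finset.sum_div]
        apply Finset.sum_congr rfl
        intro v _
        ring
    _ = (∑ i, q i * (1 - q i)) / τ ^ 2 := by rw [Ew_Zsq]
    _ ≤ ((n : ℝ) / 4) / τ ^ 2 := by
        gcongr
        calc ∑ i, q i * (1 - q i) ≤ ∑ _i : Fin n, (1/4 : ℝ) :=
              Finset.sum_le_sum (fun i _ => by nlinarith [sq_nonneg (q i - 1/2)])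
          _ = (n : ℝ) / 4 := by
              rw [Finset.sum_const, Finset.card_univ, Fintype.card_fin, nsmul_eq_mul]
              ring
    _ = (n : ℝ) / (4 * τ ^ 2) := by ring

lemma sum_range_split (n A B : ℕ) (hA : A ≤ B) (hB : B ≤ n) (c : ℝ) :
    ∑ i : Fin n, (if (i:ℕ) < A then (1:ℝ) else if (i:ℕ) < B then 0 else c)
      = (A : ℝ) + ((n - B : ℕ) : ℝ) * c := by
  rw [Fin.sum_univ_eq_sum_range (fun j => if j < A then (1:ℝ) else if j < B then 0 else c)]
  rw [Finset.range_eq_Ico, ← Finset.sum_Ico_consecutive _ (Nat.zero_le B) hB,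
    ← Finset.sum_Ico_consecutive _ (Nat.zero_le A) hA]
  have e1 : ∑ j ∈ Finset.Ico 0 A, (if j < A then (1:ℝ) else if j < B then 0 else c)
      = (A : ℝ) := by
    rw [Finset.sum_congr rfl fun j hj => if_pos (Finset.mem_Ico.mp hj).2]
    simp
  have e2 : ∑ j ∈ Finset.Ico A B, (if j < A then (1:ℝ) else if j < B then 0 else c) = 0 := by
    apply Finset.sum_eq_zero
    intro j hj
    obtain ⟨h1, h2⟩ := Finset.mem_Ico.mp hj
    rw [if_neg (by omega), if_pos h2]
  have e3 : ∑ j ∈ Finset.Ico B n, (if j < A then (1:ℝ) else if j < B then 0 else c)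
      = ((n - B : ℕ) : ℝ) * c := by
    rw [Finset.sum_congr rfl fun j hj => ?_]
    · rw [Finset.sum_const, Nat.card_Ico, nsmul_eq_mul]
    · obtain ⟨h1, h2⟩ := Finset.mem_Ico.mp hj
      rw [if_neg (by omega), if_neg (by omega)]
  rw [e1, e2, e3]
  ring

end Aux3


section Aux4

lemma fid_lower (PH PL phH phL alphaF alphaU : ℝ)
    (hPH : 0 < PH) (hPL : 0 < PL) (hPsum : PH + PL = 1)
    (hphL0 : 0 < phL) (hph : phL < phH) (hphH1 : phH < 1)
    {n : ℕ} (σ : OneRound n) (hreg : Regular alphaF alphaU σ)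
    (εh : ℝ) (hεh : 0 ≤ εh)
    (hBNE : IsEpsStrongBNE1 PH PL phH phL alphaF alphaU σ εh)
    (a b : ℝ) (hb0 : 0 ≤ b) (hba : b ≤ a) (ha1 : a ≤ 1)
    (τ : ℝ) (hτ : 0 < τ)
    (hlt : numF alphaF n + numU alphaU n < n)
    (hAH : (n:ℝ)/2 + τ ≤ (numF alphaF n : ℝ) +
      ((n - (numF alphaF n + numU alphaU n) : ℕ) : ℝ) * (phH * a + (1 - phH) * b))
    (hAL : (numF alphaF n : ℝ) +
      ((n - (numF alphaF n + numU alphaU n) : ℕ) : ℝ) * (phL * a + (1 - phL) * b)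
        ≤ (n:ℝ)/2 - τ) :
    1 - (n : ℝ)/(4 * τ^2) - εh ≤
      PL * (1 - prAwins1 phH phL σ false) + PH * prAwins1 phH phL σ true := by
  classical
  set nF := numF alphaF n with hnF
  set nU := numU alphaU n with hnU
  have hb1 : b ≤ 1 := le_trans hba ha1
  have ha0 : 0 ≤ a := le_trans hb0 hba
  set σ'' : OneRound n :=
    { s := fun i m => if nF + nU ≤ (i:ℕ) then (if m then a else b) else σ.s i m
      nonneg := by
        intro i m
        split
        · split <;> [exact ha0; exact hb0]
        · exact σ.nonneg i m
      le_one := by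
        intro i m
        split
        · split <;> [exact ha1; exact hb1]
        · exact σ.le_one i m } with hσ''
  have hsig0 : ∀ k, 0 ≤ sigP phH phL k := sigP_nonneg hphL0.le hph.le
  have hsig1 : ∀ k, sigP phH phL k ≤ 1 := sigP_le_one hph.le hphH1.le
  have hq : ∀ (k : Bool) (i : Fin n), margP phH phL σ'' k i =
      if (i:ℕ) < nF then 1 else if (i:ℕ) < nF + nU then 0
        else (sigP phH phL k * a + (1 - sigP phH phL k) * b) := by
    intro k i
    by_cases h1 : (i:ℕ) < nF
    · have hs : ∀ m, σ''.s i m = 1 := by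
        intro m
        show (if nF + nU ≤ (i:ℕ) then (if m then a else b) else σ.s i m) = 1
        rw [if_neg (by omega)]
        exact (hreg i m).1 h1
      rw [if_pos h1]
      unfold margP
      rw [hs true, hs false]
      ring
    · by_cases h2 : (i:ℕ) < nF + nU
      · have hs : ∀ m, σ''.s i m = 0 := by
          intro m
          show (if nF + nU ≤ (i:ℕ) then (if m then a else b) else σ.s i m) = 0
          rw [if_neg (by omega)]
          exact (hreg i m).2 ⟨by omega, h2⟩
        rw [if_neg h1, if_pos h2]
        unfold margP
        rw [hs true, hs false]
        ring
      · have hst : σ''.s i true = a := by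
          show (if nF + nU ≤ (i:ℕ) then (if true then a else b) else σ.s i true) = a
          rw [if_pos (by omega)]
          rfl
        have hsf : σ''.s i false = b := by
          show (if nF + nU ≤ (i:ℕ) then (if false then a else b) else σ.s i false) = b
          rw [if_pos (by omega)]
          rfl
        rw [if_neg h1, if_neg h2]
        unfold margP
        rw [hst, hsf]
  have hsum : ∀ k : Bool, ∑ i, margP phH phL σ'' k i =
      (nF : ℝ) + ((n - (nF + nU) : ℕ) : ℝ) *
        (sigP phH phL k * a + (1 - sigP phH phL k) * b) := by
    intro k
    rw [Finset.sum_congr rfl fun i _ => hq k i]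
    exact sum_range_split n nF (nF + nU) (Nat.le_add_right _ _) hlt.le _
  set δ := (n : ℝ) / (4 * τ ^ 2) with hδ
  have hδ0 : 0 ≤ δ := by positivity
  -- upper bound on the probability that A wins in state L
  have hpL : prAwins1 phH phL σ'' false ≤ δ := by
    rw [prAwins1_eq]
    apply tail_le _ (margP_nonneg hphL0.le hph.le hphH1.le σ'' false)
      (margP_le_one hphL0.le hph.le hphH1.le σ'' false) τ hτ
    intro v hv
    have hZ : ∑ i, ((if v i then (1:ℝ) else 0) - margP phH phL σ'' false i)
        = (countA v : ℝ) - ∑ i, margP phH phL σ'' false i := by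
      rw [Finset.sum_sub_distrib, countA_cast]
    have hc : (n : ℝ) < 2 * (countA v : ℝ) := by exact_mod_cast hv
    have hsf : sigP phH phL false = phL := rfl
    have hsum' := hsum false
    rw [hsf] at hsum'
    have hτZ : τ ≤ ∑ i, ((if v i then (1:ℝ) else 0) - margP phH phL σ'' false i) := by
      rw [hZ, hsum']
      linarith
    exact le_trans hτZ (le_abs_self _)
  -- upper bound on the probability that A loses in state H
  have hpH : 1 - prAwins1 phH phL σ'' true ≤ δ := by
    have hsplit : prAwins1 phH phL σ'' true +
        ∑ v : Fin n → Bool,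
          (∏ i, if v i then margP phH phL σ'' true i else 1 - margP phH phL σ'' true i) *
          (if ¬(2 * countA v > n) then (1:ℝ) else 0) = 1 := by
      have hper : ∀ v : Fin n → Bool,
          (∏ i, if v i then margP phH phL σ'' true i else 1 - margP phH phL σ'' true i) *
            (if 2 * countA v > n then (1:ℝ) else 0) +
          (∏ i, if v i then margP phH phL σ'' true i else 1 - margP phH phL σ'' true i) *
            (if ¬(2 * countA v > n) then (1:ℝ) else 0)
          = ∏ i, if v i then margP phH phL σ'' true i else 1 - margP phH phL σ'' true i := by
        intro v
        by_cases hv : 2 * countA v > n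
        · rw [if_pos hv, if_neg (not_not_intro hv)]
          ring
        · rw [if_neg hv, if_pos hv]
          ring
      rw [prAwins1_eq, ← Finset.sum_add_distrib,
        Finset.sum_congr rfl (fun v _ => hper v), sum_bern]
    have htail : ∑ v : Fin n → Bool,
        (∏ i, if v i then margP phH phL σ'' true i else 1 - margP phH phL σ'' true i) *
          (if ¬(2 * countA v > n) then (1:ℝ) else 0) ≤ δ := by
      apply tail_le _ (margP_nonneg hphL0.le hph.le hphH1.le σ'' true)
        (margP_le_one hphL0.le hph.le hphH1.le σ'' true) τ hτ
      intro v hv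
      have hc : 2 * (countA v : ℝ) ≤ (n : ℝ) := by
        have : 2 * countA v ≤ n := by omega
        exact_mod_cast this
      have hZ : ∑ i, ((if v i then (1:ℝ) else 0) - margP phH phL σ'' true i)
          = (countA v : ℝ) - ∑ i, margP phH phL σ'' true i := by
        rw [Finset.sum_sub_distrib, countA_cast]
      have hst : sigP phH phL true = phH := rfl
      have hsum' := hsum true
      rw [hst] at hsum'
      have hτZ : τ ≤ -(∑ i, ((if v i then (1:ℝ) else 0) - margP phH phL σ'' true i)) := by
        rw [hZ, hsum']
        linarith
      exact le_trans hτZ (neg_le_abs _)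
    linarith
  -- apply the equilibrium property
  by_contra hcon
  push_neg at hcon
  have hfid'' : 1 - δ ≤ PL * (1 - prAwins1 phH phL σ'' false) +
      PH * prAwins1 phH phL σ'' true := by
    nlinarith [mul_nonneg hPL.le (by linarith : (0:ℝ) ≤ δ - prAwins1 phH phL σ'' false),
      mul_nonneg hPH.le (by linarith : (0:ℝ) ≤ δ - (1 - prAwins1 phH phL σ'' true))]
  apply hBNE
  refine ⟨Finset.univ.filter (fun i : Fin n => nF + nU ≤ (i:ℕ)), σ'', ?_, ?_, ?_⟩
  · intro i hi
    simp only [Finset.mem_filter, Finset.mem_univ, true_and, not_le] at hi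
    funext m
    show (if nF + nU ≤ (i:ℕ) then (if m then a else b) else σ.s i m) = σ.s i m
    rw [if_neg (by omega)]
  · intro i hi
    simp only [Finset.mem_filter, Finset.mem_univ, true_and] at hi
    have hnotF : ¬((i:ℕ) < numF alphaF n) := by omega
    have hnotU : ¬((i:ℕ) < numF alphaF n + numU alphaU n) := by omega
    simp only [util1, if_neg hnotF, if_neg hnotU]
    linarith
  · refine ⟨⟨nF + nU, hlt⟩, ?_, ?_⟩
    · simp only [Finset.mem_filter, Finset.mem_univ, true_and]
      exact le_refl _
    · have hnotF : ¬(((⟨nF + nU, hlt⟩ : Fin n) : ℕ) < numF alphaF n) := by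
        simp only [Fin.val_mk]
        omega
      have hnotU : ¬(((⟨nF + nU, hlt⟩ : Fin n) : ℕ) < numF alphaF n + numU alphaU n) := by
        simp only [Fin.val_mk]
        omega
      simp only [util1, if_neg hnotF, if_neg hnotU]
      linarith

end Aux4


section Aux5

lemma util_friendly {n : ℕ} (PH PL phH phL alphaF alphaU : ℝ) (σc : TwoRound n) (j : Fin n)
    (hj : (j:ℕ) < numF alphaF n) :
    util PH PL phH phL alphaF alphaU σc j =
      PH * prAwins phH phL σc true + PL * prAwins phH phL σc false := by
  simp only [util, if_pos hj]

lemma util_unfriendly {n : ℕ} (PH PL phH phL alphaF alphaU : ℝ) (σc : TwoRound n) (j : Fin n)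
    (hj1 : ¬((j:ℕ) < numF alphaF n)) (hj2 : (j:ℕ) < numF alphaF n + numU alphaU n) :
    util PH PL phH phL alphaF alphaU σc j =
      PH * (1 - prAwins phH phL σc true) + PL * (1 - prAwins phH phL σc false) := by
  simp only [util, if_neg hj1, if_pos hj2]

lemma util_contingent {n : ℕ} (PH PL phH phL alphaF alphaU : ℝ) (σc : TwoRound n) (j : Fin n)
    (hj1 : ¬((j:ℕ) < numF alphaF n)) (hj2 : ¬((j:ℕ) < numF alphaF n + numU alphaU n)) :
    util PH PL phH phL alphaF alphaU σc j =
      PL * (1 - prAwins phH phL σc false) + PH * prAwins phH phL σc true := by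
  simp only [util, if_neg hj1, if_neg hj2]
  rfl

lemma util_bounds {PH PL phH phL alphaF alphaU : ℝ}
    (h0 : 0 ≤ phL) (h01 : phL ≤ phH) (h1 : phH ≤ 1)
    (hPH : 0 ≤ PH) (hPL : 0 ≤ PL) (hPsum : PH + PL = 1)
    {n : ℕ} (σ : TwoRound n) (i : Fin n) :
    0 ≤ util PH PL phH phL alphaF alphaU σ i ∧ util PH PL phH phL alphaF alphaU σ i ≤ 1 := by
  have hT0 := prAwins_nonneg h0 h01 h1 σ true
  have hT1 := prAwins_le_one h0 h01 h1 σ true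
  have hF0 := prAwins_nonneg h0 h01 h1 σ false
  have hF1 := prAwins_le_one h0 h01 h1 σ false
  unfold util fidelity
  split_ifs <;> constructor <;> nlinarith

end Aux5


/-- The hybrid two-round profile: first round as in `σ'`, second round following `τ`. -/
def shadow {n : ℕ} (σ' : TwoRound n) (τ : OneRound n) : TwoRound n :=
  { s1 := σ'.s1
    s2 := fun j m _ => τ.s j m
    s1_nonneg := σ'.s1_nonneg
    s1_le_one := σ'.s1_le_one
    s2_nonneg := fun j m _ => τ.nonneg j m
    s2_le_one := fun j m _ => τ.le_one j m }

set_option maxHeartbeats 3200000 in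
/-- **Theorem 4.** If the regular one-round profiles `Σ̂ n` are `ε̂ n`-strong Bayes Nash
equilibria of the one-round game with nonnegative `ε̂ n → 0`, then any two-round profiles
`Σ n` that are second-round consistent with `Σ̂ n` are `ε n`-strong Bayes Nash equilibria
of the two-round game for some nonnegative `ε n → 0`. -/
theorem one_round_equilibrium_transfers
    (PH PL phH phL alphaF alphaU : ℝ)
    (hPH : 0 < PH) (hPL : 0 < PL) (hPsum : PH + PL = 1)
    (hphL0 : 0 < phL) (hph : phL < phH) (hphH1 : phH < 1)
    (halphaF0 : 0 ≤ alphaF) (halphaF : alphaF < 1 / 2)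
    (halphaU0 : 0 ≤ alphaU) (halphaU : alphaU < 1 / 2)
    (halphaC : alphaF + alphaU < 1)
    (Shat : ∀ n : ℕ, OneRound n) (εhat : ℕ → ℝ)
    (hreg : ∀ n, Regular alphaF alphaU (Shat n))
    (hεhat0 : ∀ n, 0 ≤ εhat n) (hεhatlim : Tendsto εhat atTop (nhds 0))
    (hBNE1 : ∀ n, IsEpsStrongBNE1 PH PL phH phL alphaF alphaU (Shat n) (εhat n))
    (S : ∀ n : ℕ, TwoRound n)
    (hcons : ∀ n, SecondRoundConsistent (S n) (Shat n)) :
    ∃ ε : ℕ → ℝ, (∀ n, 0 ≤ ε n) ∧ Tendsto ε atTop (nhds 0) ∧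
      ∀ n, IsEpsStrongBNE PH PL phH phL alphaF alphaU (S n) (ε n) := by
  classical
  -- the basic constants
  set αC : ℝ := 1 - alphaF - alphaU with hαCdef
  have hαC0 : 0 < αC := by rw [hαCdef]; linarith
  set t : ℝ := (1/2 - alphaF) / αC with htdef
  have ht0 : 0 < t := div_pos (by linarith) hαC0
  have ht1 : t < 1 := (div_lt_one hαC0).mpr (by rw [hαCdef]; linarith)
  set m0 : ℝ := (phL + phH) / 2 with hm0def
  have hm00 : 0 < m0 := by rw [hm0def]; linarith
  have hm01 : m0 < 1 := by rw [hm0def]; linarith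
  set lam : ℝ := min (min (t / m0) ((1 - t) / (1 - m0))) 1 with hlamdef
  have hlam0 : 0 < lam :=
    lt_min (lt_min (div_pos ht0 hm00) (div_pos (by linarith) (by linarith))) one_pos
  have hlam1 : lam ≤ 1 := min_le_right _ _
  have hlam_le1 : lam ≤ t / m0 := by
    rw [hlamdef]
    exact le_trans (min_le_left _ _) (min_le_left _ _)
  have hlam_le2 : lam ≤ (1 - t) / (1 - m0) := by
    rw [hlamdef]
    exact le_trans (min_le_left _ _) (min_le_right _ _)
  have hlamt : lam * m0 ≤ t := (le_div_iff₀ hm00).mp hlam_le1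
  have hlamt' : lam * (1 - m0) ≤ 1 - t := (le_div_iff₀ (by linarith)).mp hlam_le2
  set b : ℝ := t - lam * m0 with hbdef
  set a : ℝ := b + lam with hadef
  have hb0 : 0 ≤ b := by rw [hbdef]; linarith
  have hba : b ≤ a := by rw [hadef]; linarith
  have ha1 : a ≤ 1 := by rw [hadef, hbdef]; linarith
  have ha0 : 0 ≤ a := le_trans hb0 hba
  set g0 : ℝ := lam * (phH - phL) / 2 with hg0def
  have hg00 : 0 < g0 := by
    rw [hg0def]
    exact div_pos (mul_pos hlam0 (by linarith)) two_pos
  set β : ℝ := g0 * αC / 2 with hβdef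
  have hβ0 : 0 < β := by rw [hβdef]; exact div_pos (mul_pos hg00 hαC0) two_pos
  have hμHval : phH * a + (1 - phH) * b = t + g0 := by
    rw [hadef, hbdef, hg0def, hm0def]; ring
  have hμLval : phL * a + (1 - phL) * b = t - g0 := by
    rw [hadef, hbdef, hg0def, hm0def]; ring
  have hphH0 : (0:ℝ) ≤ phH := le_of_lt (lt_trans hphL0 hph)
  have hμH0 : 0 ≤ t + g0 := by
    rw [← hμHval]
    have h1 := mul_nonneg hphH0 ha0
    have h2 := mul_nonneg (by linarith : (0:ℝ) ≤ 1 - phH) hb0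
    linarith
  have hμH1 : t + g0 ≤ 1 := by
    rw [← hμHval]
    have h1 := mul_le_mul_of_nonneg_left ha1 hphH0
    have h2 := mul_le_mul_of_nonneg_left (le_trans hba ha1) (by linarith : (0:ℝ) ≤ 1 - phH)
    linarith
  have hμL0 : 0 ≤ t - g0 := by
    rw [← hμLval]
    have h1 := mul_nonneg hphL0.le ha0
    have h2 := mul_nonneg (by linarith : (0:ℝ) ≤ 1 - phL) hb0
    linarith
  have hμL1 : t - g0 ≤ 1 := by
    rw [← hμLval]
    have h1 := mul_le_mul_of_nonneg_left ha1 hphL0.le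
    have h2 := mul_le_mul_of_nonneg_left (le_trans hba ha1) (by linarith : (0:ℝ) ≤ 1 - phL)
    linarith
  have hct : αC * t = 1/2 - alphaF := by
    rw [htdef]
    field_simp
  clear_value αC t m0 lam b a g0 β
  -- the epsilon sequence
  refine ⟨fun n => 2 * εhat n + 1 / (2 * β^2 * (n:ℝ)) +
    (if (n:ℝ) * β < 2 then (1:ℝ) else 0), ?_, ?_, ?_⟩
  · intro n
    have h1 : 0 ≤ 2 * εhat n := by linarith [hεhat0 n]
    have h2 : (0:ℝ) ≤ 1 / (2 * β^2 * (n:ℝ)) := by positivity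
    have h3 : (0:ℝ) ≤ (if (n:ℝ) * β < 2 then (1:ℝ) else 0) := by split <;> norm_num
    linarith
  · have l1 : Tendsto (fun n => 2 * εhat n) atTop (nhds 0) := by
      simpa using hεhatlim.const_mul 2
    have l2 : Tendsto (fun n : ℕ => 1 / (2 * β^2 * (n:ℝ))) atTop (nhds 0) := by
      have h := tendsto_one_div_atTop_nhds_zero_nat.const_mul (1 / (2 * β^2))
      rw [mul_zero] at h
      refine h.congr fun n => ?_
      rw [one_div_mul_one_div]
    have l3 : Tendsto (fun n : ℕ => (if (n:ℝ) * β < 2 then (1:ℝ) else 0)) atTop (nhds 0) := by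
      refine Tendsto.congr' ?_ tendsto_const_nhds
      filter_upwards [eventually_ge_atTop ⌈2/β⌉₊] with n hn
      have h1 : (2:ℝ)/β ≤ (n:ℝ) := le_trans (Nat.le_ceil _) (Nat.cast_le.mpr hn)
      have h2 : (2:ℝ) ≤ (n:ℝ) * β := (div_le_iff₀ hβ0).mp h1
      rw [if_neg (not_lt.mpr h2)]
    have := (l1.add l2).add l3
    simpa using this
  · intro n
    rintro ⟨D, σ', hagree, hweak, i, hiD, hgain⟩
    by_cases hsmall : (n:ℝ) * β < 2
    · -- trivial case: ε n ≥ 1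
      have hεge : (1:ℝ) ≤ 2 * εhat n + 1 / (2 * β^2 * (n:ℝ)) +
          (if (n:ℝ) * β < 2 then (1:ℝ) else 0) := by
        rw [if_pos hsmall]
        have h1 := hεhat0 n
        have h2 : (0:ℝ) ≤ 1 / (2 * β^2 * (n:ℝ)) := by positivity
        linarith
      obtain ⟨hu0, _⟩ := util_bounds (PH := PH) (PL := PL) (alphaF := alphaF)
        (alphaU := alphaU) hphL0.le hph.le hphH1.le hPH.le hPL.le hPsum (S n) i
      obtain ⟨_, hu1⟩ := util_bounds (PH := PH) (PL := PL) (alphaF := alphaF)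
        (alphaU := alphaU) hphL0.le hph.le hphH1.le hPH.le hPL.le hPsum σ' i
      linarith
    · push_neg at hsmall
      -- `n` is large: the real argument
      have hn0 : 0 < n := by
        by_contra h
        push_neg at h
        have hn : n = 0 := by omega
        rw [hn] at hsmall
        simp at hsmall
        linarith
      have hnR : (0:ℝ) < n := by exact_mod_cast hn0
      have hsm' : 2 ≤ β * (n:ℝ) := by
        have := mul_comm (n:ℝ) β
        linarith
      have hFle : ((numF alphaF n : ℕ) : ℝ) ≤ alphaF * n := by
        unfold numF
        exact Nat.floor_le (by positivity)
      have hUle : ((numU alphaU n : ℕ) : ℝ) ≤ alphaU * n := by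
        unfold numU
        exact Nat.floor_le (by positivity)
      have hFgt : alphaF * n - 1 < ((numF alphaF n : ℕ) : ℝ) := by
        have h := Nat.lt_floor_add_one (alphaF * (n:ℝ))
        unfold numF
        push_cast at h ⊢
        linarith
      have hUgt : alphaU * n - 1 < ((numU alphaU n : ℕ) : ℝ) := by
        have h := Nat.lt_floor_add_one (alphaU * (n:ℝ))
        unfold numU
        push_cast at h ⊢
        linarith
      have hαCn : αC * (n:ℝ) = (n:ℝ) - alphaF * n - alphaU * n := by
        rw [hαCdef]; ring
      have hlt : numF alphaF n + numU alphaU n < n := by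
        have hr : ((numF alphaF n : ℕ) : ℝ) + ((numU alphaU n : ℕ) : ℝ) < (n:ℝ) := by
          have hpos := mul_pos hαC0 hnR
          linarith
        exact_mod_cast hr
      have hcast : ((n - (numF alphaF n + numU alphaU n) : ℕ) : ℝ)
          = (n:ℝ) - numF alphaF n - numU alphaU n := by
        rw [Nat.cast_sub hlt.le]
        push_cast
        ring
      have hX1 : αC * (n:ℝ) ≤ (n:ℝ) - numF alphaF n - numU alphaU n := by
        linarith
      have hX2 : (n:ℝ) - numF alphaF n - numU alphaU n ≤ αC * (n:ℝ) + 2 := by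
        linarith
      have hτ0 : 0 < β * (n:ℝ) := mul_pos hβ0 hnR
      have hAH : (n:ℝ)/2 + β * (n:ℝ) ≤ (numF alphaF n : ℝ) +
          ((n - (numF alphaF n + numU alphaU n) : ℕ) : ℝ) * (phH * a + (1 - phH) * b) := by
        rw [hcast, hμHval]
        have hm := mul_le_mul_of_nonneg_right hX1 hμH0
        have e1 : αC * (n:ℝ) * (t + g0) = (1/2 - alphaF) * n + 2 * (β * n) := by
          rw [hβdef]
          linear_combination (n:ℝ) * hct
        linarith
      have hAL : (numF alphaF n : ℝ) +
          ((n - (numF alphaF n + numU alphaU n) : ℕ) : ℝ) * (phL * a + (1 - phL) * b)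
            ≤ (n:ℝ)/2 - β * (n:ℝ) := by
        rw [hcast, hμLval]
        have hm := mul_le_mul_of_nonneg_right hX2 hμL0
        have e2 : (αC * (n:ℝ) + 2) * (t - g0)
            = (1/2 - alphaF) * n - 2 * (β * n) + 2 * (t - g0) := by
          rw [hβdef]
          linear_combination (n:ℝ) * hct
        linarith
      have hfid := fid_lower PH PL phH phL alphaF alphaU hPH hPL hPsum hphL0 hph hphH1
        (Shat n) (hreg n) (εhat n) (hεhat0 n) (hBNE1 n) a b hb0 hba ha1
        (β * (n:ℝ)) hτ0 hlt hAH hAL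
      set η := εhat n + (n:ℝ)/(4*(β*(n:ℝ))^2) with hηdef
      have hη0 : 0 ≤ η := by
        rw [hηdef]
        have h2 : (0:ℝ) ≤ (n:ℝ)/(4*(β*(n:ℝ))^2) := by positivity
        linarith [hεhat0 n]
      have hεeq : 2 * εhat n + 1 / (2 * β^2 * (n:ℝ)) +
          (if (n:ℝ) * β < 2 then (1:ℝ) else 0) = 2 * η := by
        rw [if_neg (not_lt.mpr hsmall), hηdef]
        have hβne : β ≠ 0 := ne_of_gt hβ0
        have hnne : (n:ℝ) ≠ 0 := ne_of_gt hnR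
        field_simp
        ring
      have hfid1 : 1 - η ≤ PL * (1 - prAwins1 phH phL (Shat n) false) +
          PH * prAwins1 phH phL (Shat n) true := by
        rw [hηdef]
        linarith
      have hcolT : prAwins phH phL (S n) true = prAwins1 phH phL (Shat n) true :=
        prAwins_collapse phH phL (S n) (Shat n) (hcons n) true
      have hcolF : prAwins phH phL (S n) false = prAwins1 phH phL (Shat n) false :=
        prAwins_collapse phH phL (S n) (Shat n) (hcons n) false
      have hpT0 := prAwins1_nonneg hphL0.le hph.le hphH1.le (Shat n) true
      have hpT1 := prAwins1_le_one hphL0.le hph.le hphH1.le (Shat n) true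
      have hpF0 := prAwins1_nonneg hphL0.le hph.le hphH1.le (Shat n) false
      have hpF1 := prAwins1_le_one hphL0.le hph.le hphH1.le (Shat n) false
      have hqT0 := prAwins_nonneg hphL0.le hph.le hphH1.le σ' true
      have hqT1 := prAwins_le_one hphL0.le hph.le hphH1.le σ' true
      have hqF0 := prAwins_nonneg hphL0.le hph.le hphH1.le σ' false
      have hqF1 := prAwins_le_one hphL0.le hph.le hphH1.le σ' false
      have hPHqT : PH * prAwins phH phL σ' true ≤ PH * 1 :=
        mul_le_mul_of_nonneg_left hqT1 hPH.le
      have hPHpT : PH * prAwins1 phH phL (Shat n) true ≤ PH * 1 :=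
        mul_le_mul_of_nonneg_left hpT1 hPH.le
      have hPLqF0 : 0 ≤ PL * prAwins phH phL σ' false := mul_nonneg hPL.le hqF0
      have hPLpF0 : 0 ≤ PL * prAwins1 phH phL (Shat n) false := mul_nonneg hPL.le hpF0
      -- the hybrid profile in which all second-round strategies follow `Shat n`
      set τ2 : TwoRound n := shadow σ' (Shat n) with hτ2def
      have hcτT : prAwins phH phL τ2 true = prAwins1 phH phL (Shat n) true :=
        prAwins_collapse phH phL τ2 (Shat n) (fun i m x => rfl) true
      have hcτF : prAwins phH phL τ2 false = prAwins1 phH phL (Shat n) false :=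
        prAwins_collapse phH phL τ2 (Shat n) (fun i m x => rfl) false
      rcases Nat.lt_or_ge (i:ℕ) (numF alphaF n) with hiF | hiF
      · -- the strict gainer is friendly
        rw [util_friendly PH PL phH phL alphaF alphaU (S n) i hiF,
          util_friendly PH PL phH phL alphaF alphaU σ' i hiF, hcolT, hcolF] at hgain
        by_cases hUx : ∃ j ∈ D, ¬((j:ℕ) < numF alphaF n) ∧
            (j:ℕ) < numF alphaF n + numU alphaU n
        · obtain ⟨j, hjD, hj1, hj2⟩ := hUx
          have hw := hweak j hjD
          rw [util_unfriendly PH PL phH phL alphaF alphaU (S n) j hj1 hj2,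
            util_unfriendly PH PL phH phL alphaF alphaU σ' j hj1 hj2, hcolT, hcolF] at hw
          linarith
        · by_cases hCx : ∃ j ∈ D, ¬((j:ℕ) < numF alphaF n + numU alphaU n)
          · obtain ⟨j, hjD, hj2⟩ := hCx
            have hj1 : ¬((j:ℕ) < numF alphaF n) := by omega
            have hw := hweak j hjD
            rw [util_contingent PH PL phH phL alphaF alphaU (S n) j hj1 hj2,
              util_contingent PH PL phH phL alphaF alphaU σ' j hj1 hj2, hcolT, hcolF] at hw
            linarith
          · -- every deviator is friendly
            have hDF : ∀ j ∈ D, (j:ℕ) < numF alphaF n := by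
              intro j hj
              by_contra hh
              by_cases h2 : (j:ℕ) < numF alphaF n + numU alphaU n
              · exact hUx ⟨j, hj, hh, h2⟩
              · exact hCx ⟨j, hj, h2⟩
            have hs2le : ∀ (j : Fin n) (m : Bool) (x : ℕ), σ'.s2 j m x ≤ τ2.s2 j m x := by
              intro j m x
              show σ'.s2 j m x ≤ (Shat n).s j m
              by_cases hjD : j ∈ D
              · rw [((hreg n) j m).1 (hDF j hjD)]
                exact σ'.s2_le_one j m x
              · rw [(hagree j hjD).2, hcons n j m x]
            have hmT := prAwins_mono hphL0.le hph.le hphH1.le σ' τ2 rfl hs2le true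
            have hmF := prAwins_mono hphL0.le hph.le hphH1.le σ' τ2 rfl hs2le false
            rw [hcτT] at hmT
            rw [hcτF] at hmF
            have h1 := mul_le_mul_of_nonneg_left hmT hPH.le
            have h2 := mul_le_mul_of_nonneg_left hmF hPL.le
            linarith
      · rcases Nat.lt_or_ge (i:ℕ) (numF alphaF n + numU alphaU n) with hiU | hiC
        · -- the strict gainer is unfriendly
          have hi1 : ¬((i:ℕ) < numF alphaF n) := not_lt.mpr hiF
          rw [util_unfriendly PH PL phH phL alphaF alphaU (S n) i hi1 hiU,
            util_unfriendly PH PL phH phL alphaF alphaU σ' i hi1 hiU, hcolT, hcolF] at hgain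
          by_cases hFx : ∃ j ∈ D, (j:ℕ) < numF alphaF n
          · obtain ⟨j, hjD, hjF⟩ := hFx
            have hw := hweak j hjD
            rw [util_friendly PH PL phH phL alphaF alphaU (S n) j hjF,
              util_friendly PH PL phH phL alphaF alphaU σ' j hjF, hcolT, hcolF] at hw
            linarith
          · by_cases hCx : ∃ j ∈ D, ¬((j:ℕ) < numF alphaF n + numU alphaU n)
            · obtain ⟨j, hjD, hj2⟩ := hCx
              have hj1 : ¬((j:ℕ) < numF alphaF n) := by omega
              have hw := hweak j hjD
              rw [util_contingent PH PL phH phL alphaF alphaU (S n) j hj1 hj2,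
                util_contingent PH PL phH phL alphaF alphaU σ' j hj1 hj2, hcolT, hcolF] at hw
              linarith
            · -- every deviator is unfriendly
              have hDU : ∀ j ∈ D, ¬((j:ℕ) < numF alphaF n) ∧
                  (j:ℕ) < numF alphaF n + numU alphaU n := by
                intro j hj
                constructor
                · intro hh
                  exact hFx ⟨j, hj, hh⟩
                · by_contra hh
                  exact hCx ⟨j, hj, hh⟩
              have hs2ge : ∀ (j : Fin n) (m : Bool) (x : ℕ), τ2.s2 j m x ≤ σ'.s2 j m x := by
                intro j m x
                show (Shat n).s j m ≤ σ'.s2 j m x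
                by_cases hjD : j ∈ D
                · obtain ⟨hj1, hj2⟩ := hDU j hjD
                  rw [((hreg n) j m).2 ⟨not_lt.mp hj1, hj2⟩]
                  exact σ'.s2_nonneg j m x
                · rw [(hagree j hjD).2, hcons n j m x]
              have hmT := prAwins_mono hphL0.le hph.le hphH1.le τ2 σ' rfl hs2ge true
              have hmF := prAwins_mono hphL0.le hph.le hphH1.le τ2 σ' rfl hs2ge false
              rw [hcτT] at hmT
              rw [hcτF] at hmF
              have h1 := mul_le_mul_of_nonneg_left hmT hPH.le
              have h2 := mul_le_mul_of_nonneg_left hmF hPL.le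
              linarith
        · -- the strict gainer is contingent
          have hi1 : ¬((i:ℕ) < numF alphaF n) := not_lt.mpr hiF
          have hi2 : ¬((i:ℕ) < numF alphaF n + numU alphaU n) := not_lt.mpr hiC
          rw [util_contingent PH PL phH phL alphaF alphaU (S n) i hi1 hi2,
            util_contingent PH PL phH phL alphaF alphaU σ' i hi1 hi2, hcolT, hcolF] at hgain
          linarith


end TwoRoundVoting
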